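/- arXiv:1604.05896 — 3 statements merged into one kernel-verified Lean document; each statement's English description precedes it below -/
import Mathlib

section
/- Let B be a k×d random matrix with i.i.d. N(0,1) entries, a>0, P = a BᵀB. Then for all non-random u, v ∈ ℝᵈ, E[μ_{Pu} μ_{Pv}] = (a²k/d)·(u·v) + a²·k·(k+1)·μ_u μ_v. -/
open MeasureTheory ProbabilityTheory BigOperators Matrix

noncomputable def sampleMean {d : ℕ} (x : Fin d → ℝ) : ℝ := (∑ m, x m) / d

noncomputable def sampleCov {d : ℕ} (x y : Fin d → ℝ) : ℝ :=
  (∑ m, (x m - sampleMean x) * (y m - sampleMean y)) / ((d : ℝ) - 1)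

noncomputable def proj {k d : ℕ} (a : ℝ) (B : Matrix (Fin k) (Fin d) ℝ)
    (u : Fin d → ℝ) : Fin d → ℝ := a • (Bᵀ * B).mulVec u

/-!
Write `μ_{Pu} = (a / d) ⟨B𝟙, Bu⟩`. The entries of `B` are independent standard Gaussians, so
their fourth mixed moments are given by Isserlis' formula
`E[X_p X_q X_r X_s] = δ_pq δ_rs + δ_pr δ_qs + δ_ps δ_qr`: by independence the left side is a
product of moments `E[X^n]`, which are `1, 0, 1, 0, 3` for `n ≤ 4` by the recursion
`E[X^(n+2)] = (n+1) E[X^n]` (integration by parts against `exp (-x²/2)`). By bilinearity the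
formula extends to linear forms, and summing it over pairs of rows of `B` gives
`E[⟨Bx, By⟩⟨Bz, Bw⟩] = k² ⟨x, y⟩⟨z, w⟩ + k ⟨x, z⟩⟨y, w⟩ + k ⟨x, w⟩⟨y, z⟩`;
take `x = z = 𝟙`, `y = u`, `w = v`.
-/

open Real Filter Topology
open scoped NNReal ENNReal

theorem integral_pow_add_two_mul_exp_neg_mul_sq {b : ℝ} (hb : 0 < b) (n : ℕ) :
    ∫ x, x ^ (n + 2) * exp (-b * x ^ 2) =
      (n + 1) / (2 * b) * ∫ x, x ^ n * exp (-b * x ^ 2) := by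
  have hint (m : ℕ) : Integrable fun x : ℝ ↦ x ^ m * exp (-b * x ^ 2) := by
    simpa using integrable_rpow_mul_exp_neg_mul_sq hb (s := m)
      (by linarith [m.cast_nonneg (α := ℝ)])
  have hderiv (x : ℝ) : HasDerivAt (fun x ↦ x ^ (n + 1) * exp (-b * x ^ 2))
      ((n + 1) * (x ^ n * exp (-b * x ^ 2)) - 2 * b * (x ^ (n + 2) * exp (-b * x ^ 2))) x := by
    have hexp := ((hasDerivAt_pow 2 x).const_mul (-b)).exp
    refine ((hasDerivAt_pow (n + 1) x).mul hexp).congr_deriv ?_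
    push_cast
    ring
  have hlim : Tendsto (fun x ↦ x ^ (n + 1) * exp (-b * x ^ 2)) (cocompact ℝ) (𝓝 0) := by
    have h := tendsto_rpow_abs_mul_exp_neg_mul_sq_cocompact hb ((n + 1 : ℕ) : ℝ)
    simp only [rpow_natCast] at h
    rw [tendsto_zero_iff_norm_tendsto_zero]
    simpa [abs_mul, abs_pow, abs_of_pos (exp_pos _)] using h
  have hibp := integral_of_hasDerivAt_of_tendsto hderiv
    (((hint n).const_mul _).sub ((hint (n + 2)).const_mul _))
    (hlim.mono_left atBot_le_cocompact) (hlim.mono_left atTop_le_cocompact)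
  rw [integral_sub ((hint n).const_mul _) ((hint (n + 2)).const_mul _), integral_const_mul,
    integral_const_mul, sub_zero, sub_eq_zero] at hibp
  rw [div_mul_eq_mul_div, eq_div_iff (by positivity)]
  linarith

theorem integral_pow_add_two_gaussianReal (v : ℝ≥0) (n : ℕ) :
    ∫ x, x ^ (n + 2) ∂gaussianReal 0 v = (n + 1) * v * ∫ x, x ^ n ∂gaussianReal 0 v := by
  rcases eq_or_ne v 0 with rfl | hv
  · simp
  have hpdf (f : ℝ → ℝ) : ∫ x, f x ∂gaussianReal 0 v
      = (√(2 * π * v))⁻¹ * ∫ x, f x * exp (-(2 * v : ℝ)⁻¹ * x ^ 2) := by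
    rw [integral_gaussianReal_eq_integral_smul hv, ← integral_const_mul]
    congr with x
    rw [gaussianPDFReal, smul_eq_mul]
    ring_nf
  have hb : (0 : ℝ) < (2 * v : ℝ)⁻¹ := by positivity
  rw [hpdf, hpdf, integral_pow_add_two_mul_exp_neg_mul_sq hb]
  field_simp

theorem integral_sq_gaussianReal (v : ℝ≥0) : ∫ x, x ^ 2 ∂gaussianReal 0 v = v := by
  simpa using integral_pow_add_two_gaussianReal v 0

theorem integral_pow_three_gaussianReal (v : ℝ≥0) : ∫ x, x ^ 3 ∂gaussianReal 0 v = 0 := by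
  simpa using integral_pow_add_two_gaussianReal v 1

theorem integral_pow_four_gaussianReal (v : ℝ≥0) :
    ∫ x, x ^ 4 ∂gaussianReal 0 v = 3 * v ^ 2 := by
  rw [integral_pow_add_two_gaussianReal v 2, integral_sq_gaussianReal]
  norm_num
  ring

theorem mul_mul_mul_eq_prod_pow_count {ι M : Type*} [Fintype ι] [DecidableEq ι] [CommMonoid M]
    (f : ι → M) (p q r s : ι) :
    f p * f q * f r * f s = ∏ i, f i ^ Multiset.count i {p, q, r, s} := by
  rw [← Finset.prod_subset (Finset.subset_univ _) fun i _ hi ↦ by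
      rw [Multiset.count_eq_zero_of_notMem (Multiset.mem_toFinset.not.mp hi), pow_zero],
    ← Finset.prod_multiset_map_count]
  simp [mul_assoc]

theorem prod_count_eq_pairings {ι : Type*} [Fintype ι] [DecidableEq ι] (M : ℕ → ℝ)
    (h0 : M 0 = 1) (h1 : M 1 = 0) (h2 : M 2 = 1) (h3 : M 3 = 0) (h4 : M 4 = 3) (p q r s : ι) :
    ∏ i, M (Multiset.count i {p, q, r, s}) =
      (if p = q then 1 else 0) * (if r = s then 1 else 0)
      + (if p = r then 1 else 0) * (if q = s then 1 else 0)
      + (if p = s then 1 else 0) * (if q = r then 1 else 0) := by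
  rw [← Finset.prod_subset (Finset.subset_univ ({p, q, r, s} : Multiset ι).toFinset)
    fun i _ hi ↦ by rw [Multiset.count_eq_zero_of_notMem (Multiset.mem_toFinset.not.mp hi), h0]]
  by_cases hpq : p = q <;> by_cases hpr : p = r <;> by_cases hps : p = s <;>
    by_cases hqr : q = r <;> by_cases hqs : q = s <;> by_cases hrs : r = s <;>
    subst_vars <;>
    simp_all [Multiset.insert_eq_cons, Multiset.count_cons, Finset.prod_insert, eq_comm,
      one_add_one_eq_two, two_add_one_eq_three]

theorem integrable_mul_mul_mul_of_memLp_four {α : Type*} [MeasurableSpace α] {μ : Measure α}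
    {f g h l : α → ℝ} (hf : MemLp f 4 μ) (hg : MemLp g 4 μ) (hh : MemLp h 4 μ)
    (hl : MemLp l 4 μ) : Integrable (fun x ↦ f x * g x * h x * l x) μ := by
  have := MemLp.prod' (s := Finset.univ) (f := ![f, g, h, l]) (p := fun _ ↦ 4) (μ := μ)
    (by intro i _; fin_cases i <;> assumption)
  norm_num [Fin.prod_univ_four, ENNReal.mul_inv_cancel, ← mul_assoc] at this
  exact memLp_one_iff_integrable.mp this

section

variable {Ω : Type*} [MeasurableSpace Ω] {P : Measure Ω}

theorem ProbabilityTheory.HasLaw.memLp_gaussianReal {X : Ω → ℝ} {m : ℝ} {v : ℝ≥0}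
    (hX : HasLaw X (gaussianReal m v) P) (p : ℝ≥0) : MemLp X p P := by
  have h := memLp_id_gaussianReal (μ := m) (v := v) p
  rwa [← hX.map_eq, memLp_map_measure_iff aestronglyMeasurable_id hX.aemeasurable] at h

theorem integral_mul_mul_mul_eq_pairings {ι : Type*} [Fintype ι] [DecidableEq ι]
    {X : ι → Ω → ℝ} (hX : ∀ i, HasLaw (X i) (gaussianReal 0 1) P) (hind : iIndepFun X P)
    (p q r s : ι) :
    ∫ ω, X p ω * X q ω * X r ω * X s ω ∂P =
      (if p = q then 1 else 0) * (if r = s then 1 else 0)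
      + (if p = r then 1 else 0) * (if q = s then 1 else 0)
      + (if p = s then 1 else 0) * (if q = r then 1 else 0) := by
  have hmoment (i : ι) (n : ℕ) : ∫ ω, X i ω ^ n ∂P = ∫ x, x ^ n ∂gaussianReal 0 1 :=
    (hX i).integral_comp (f := (· ^ n)) (by fun_prop)
  rw [integral_congr_ae (ae_of_all _ fun ω ↦ mul_mul_mul_eq_prod_pow_count (X · ω) p q r s),
    hind.integral_fun_prod_comp (f := fun i x ↦ x ^ Multiset.count i {p, q, r, s})
      (fun i ↦ (hX i).aemeasurable) (fun i ↦ by fun_prop)]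
  simp_rw [hmoment]
  exact prod_count_eq_pairings (fun n ↦ ∫ x, x ^ n ∂gaussianReal 0 1) (by simp)
    (by simp) (by simp [integral_sq_gaussianReal])
    (integral_pow_three_gaussianReal 1) (by simp [integral_pow_four_gaussianReal]) p q r s

theorem integral_dotProduct_mul_mul_mul_eq_pairings {ι : Type*} [Fintype ι] [DecidableEq ι]
    {X : ι → Ω → ℝ} (hX : ∀ i, HasLaw (X i) (gaussianReal 0 1) P) (hind : iIndepFun X P)
    (a b c e : ι → ℝ) :
    ∫ ω, (a ⬝ᵥ (X · ω)) * (b ⬝ᵥ (X · ω)) * (c ⬝ᵥ (X · ω)) * (e ⬝ᵥ (X · ω)) ∂P =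
      (a ⬝ᵥ b) * (c ⬝ᵥ e) + (a ⬝ᵥ c) * (b ⬝ᵥ e) + (a ⬝ᵥ e) * (b ⬝ᵥ c) := by
  have hint (p q r s : ι) : Integrable (fun ω ↦ a p * b q * c r * e s *
      (X p ω * X q ω * X r ω * X s ω)) P :=
    (integrable_mul_mul_mul_of_memLp_four ((hX p).memLp_gaussianReal 4)
      ((hX q).memLp_gaussianReal 4) ((hX r).memLp_gaussianReal 4)
      ((hX s).memLp_gaussianReal 4)).const_mul _
  have hexpand (ω : Ω) : (a ⬝ᵥ (X · ω)) * (b ⬝ᵥ (X · ω)) * (c ⬝ᵥ (X · ω)) * (e ⬝ᵥ (X · ω)) =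
      ∑ s, ∑ r, ∑ q, ∑ p, a p * b q * c r * e s * (X p ω * X q ω * X r ω * X s ω) := by
    -- the summation order is the one in which `Finset.sum_mul` and `Finset.mul_sum` expand
    simp only [dotProduct, Finset.sum_mul, Finset.mul_sum]
    refine Fintype.sum_congr _ _ fun s ↦ Fintype.sum_congr _ _ fun r ↦
      Fintype.sum_congr _ _ fun q ↦ Fintype.sum_congr _ _ fun p ↦ by ring
  simp_rw [hexpand]
  rw [integral_finsetSum _ fun s _ ↦ integrable_finsetSum _ fun r _ ↦
    integrable_finsetSum _ fun q _ ↦ integrable_finsetSum _ fun p _ ↦ hint p q r s]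
  simp_rw [integral_finsetSum _ fun _ _ ↦ integrable_finsetSum _ fun _ _ ↦
    integrable_finsetSum _ fun _ _ ↦ hint _ _ _ _]
  simp_rw [integral_finsetSum _ fun _ _ ↦ integrable_finsetSum _ fun _ _ ↦ hint _ _ _ _]
  simp_rw [integral_finsetSum _ fun _ _ ↦ hint _ _ _ _, integral_const_mul,
    integral_mul_mul_mul_eq_pairings hX hind]
  simp only [mul_add, Finset.sum_add_distrib, mul_ite, mul_one, mul_zero, Finset.sum_ite_eq',
    Finset.mem_univ, if_true, Finset.sum_ite_irrel, Finset.sum_const_zero]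
  rw [mul_comm (a ⬝ᵥ b), mul_comm (a ⬝ᵥ c)]
  simp only [dotProduct, Finset.sum_mul_sum]
  congr 1; congr 1
  all_goals exact Fintype.sum_congr _ _ fun i ↦ Fintype.sum_congr _ _ fun j ↦ by ring

def blockVec {m n : Type*} [DecidableEq m] (j : m) (x : n → ℝ) : m × n → ℝ :=
  fun i ↦ if i.1 = j then x i.2 else 0

theorem mulVec_apply_eq_blockVec_dotProduct {m n : Type*} [Fintype m] [Fintype n]
    [DecidableEq m] (A : Matrix m n ℝ) (x : n → ℝ) (j : m) :
    (A *ᵥ x) j = blockVec j x ⬝ᵥ fun i ↦ A i.1 i.2 := by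
  simp [blockVec, mulVec, dotProduct, Fintype.sum_prod_type, mul_comm]

theorem blockVec_dotProduct_blockVec {m n : Type*} [Fintype m] [Fintype n] [DecidableEq m]
    (j j' : m) (x y : n → ℝ) :
    blockVec j x ⬝ᵥ blockVec j' y = if j = j' then x ⬝ᵥ y else 0 := by
  rcases eq_or_ne j j' with rfl | h
  · simp [blockVec, dotProduct, Fintype.sum_prod_type]
  · simp [blockVec, dotProduct, Fintype.sum_prod_type, h, h.symm, ite_mul]

theorem integral_mulVec_dotProduct_mul_mulVec_dotProduct {m n : Type*} [Fintype m] [Fintype n]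
    {B : Ω → Matrix m n ℝ} (hB : ∀ j p, HasLaw (fun ω ↦ B ω j p) (gaussianReal 0 1) P)
    (hind : iIndepFun (fun (i : m × n) ω ↦ B ω i.1 i.2) P) (x y z w : n → ℝ) :
    ∫ ω, ((B ω *ᵥ x) ⬝ᵥ (B ω *ᵥ y)) * ((B ω *ᵥ z) ⬝ᵥ (B ω *ᵥ w)) ∂P =
      Fintype.card m ^ 2 * (x ⬝ᵥ y) * (z ⬝ᵥ w) + Fintype.card m * (x ⬝ᵥ z) * (y ⬝ᵥ w)
        + Fintype.card m * (x ⬝ᵥ w) * (y ⬝ᵥ z) := by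
  classical
  have hmemLp (x : n → ℝ) (j : m) : MemLp (fun ω ↦ (B ω *ᵥ x) j) 4 P := by
    simp only [mulVec, dotProduct]
    exact memLp_finsetSum _ fun p _ ↦ ((hB j p).memLp_gaussianReal 4).mul_const (x p)
  have hint (j j' : m) : Integrable (fun ω ↦ (B ω *ᵥ x) j * (B ω *ᵥ y) j *
      (B ω *ᵥ z) j' * (B ω *ᵥ w) j') P :=
    integrable_mul_mul_mul_of_memLp_four (hmemLp x j) (hmemLp y j) (hmemLp z j') (hmemLp w j')
  have hexpand (ω : Ω) : ((B ω *ᵥ x) ⬝ᵥ (B ω *ᵥ y)) * ((B ω *ᵥ z) ⬝ᵥ (B ω *ᵥ w)) =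
      ∑ j, ∑ j', (B ω *ᵥ x) j * (B ω *ᵥ y) j * (B ω *ᵥ z) j' * (B ω *ᵥ w) j' := by
    simp only [dotProduct, Finset.sum_mul_sum, mul_assoc]
  simp_rw [hexpand]
  rw [integral_finsetSum _ fun j _ ↦ integrable_finsetSum _ fun j' _ ↦ hint j j']
  have hrow (ω : Ω) := mulVec_apply_eq_blockVec_dotProduct (B ω)
  have hpair := integral_dotProduct_mul_mul_mul_eq_pairings (fun i : m × n ↦ hB i.1 i.2) hind
  simp_rw [integral_finsetSum _ fun _ _ ↦ hint _ _, hrow]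
  simp only [hpair, blockVec_dotProduct_blockVec, mul_ite, ite_mul, zero_mul, mul_zero,
    Finset.sum_add_distrib, Finset.sum_const, Finset.card_univ, nsmul_eq_mul, Finset.sum_ite_eq,
    Finset.mem_univ, if_true]
  ring

end

theorem sampleMean_proj {k d : ℕ} (a : ℝ) (B : Matrix (Fin k) (Fin d) ℝ) (u : Fin d → ℝ) :
    sampleMean (proj a B u) = a / d * ((B *ᵥ 1) ⬝ᵥ (B *ᵥ u)) := by
  rw [sampleMean, proj, ← one_dotProduct, dotProduct_smul, ← mulVec_mulVec, dotProduct_mulVec,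
    vecMul_transpose, smul_eq_mul]
  ring

theorem stmt5_general
    {Ω : Type} [MeasureSpace Ω]
    {k d : ℕ} (hd : 2 ≤ d)
    (B : Ω → Matrix (Fin k) (Fin d) ℝ)
    (hmeas : ∀ j m, Measurable fun ω => B ω j m)
    (hindep : iIndepFun
      (fun (p : Fin k × Fin d) ω => B ω p.1 p.2) ℙ)
    (hgauss : ∀ j m, Measure.map (fun ω => B ω j m) ℙ = gaussianReal 0 1)
    (a : ℝ) (u v : Fin d → ℝ) :
    ∫ ω, sampleMean (proj a (B ω) u) * sampleMean (proj a (B ω) v)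
      = a ^ 2 * k / d * (∑ n, u n * v n)
        + a ^ 2 * k * (k + 1) * (sampleMean u * sampleMean v) := by
  have hB (j : Fin k) (m : Fin d) : HasLaw (fun ω ↦ B ω j m) (gaussianReal 0 1) ℙ :=
    ⟨(hmeas j m).aemeasurable, hgauss j m⟩
  have hd0 : (d : ℝ) ≠ 0 := Nat.cast_ne_zero.mpr (by omega)
  simp_rw [sampleMean_proj, show ∀ x y : ℝ, a / d * x * (a / d * y) = (a / d) ^ 2 * (x * y)
    from fun _ _ ↦ by ring]
  rw [integral_const_mul, integral_mulVec_dotProduct_mul_mulVec_dotProduct hB hindep,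
    one_dotProduct_one]
  simp only [one_dotProduct, dotProduct_one, Fintype.card_fin]
  simp only [sampleMean, dotProduct]
  field_simp
  ring

theorem stmt5
    {Ω : Type} [MeasureSpace Ω] [IsProbabilityMeasure (ℙ : Measure Ω)]
    {k d : ℕ} (hk : 1 ≤ k) (hd : 2 ≤ d)
    (B : Ω → Matrix (Fin k) (Fin d) ℝ)
    (hmeas : ∀ j m, Measurable fun ω => B ω j m)
    (hindep : iIndepFun
      (fun (p : Fin k × Fin d) ω => B ω p.1 p.2) ℙ)
    (hgauss : ∀ j m, Measure.map (fun ω => B ω j m) ℙ = gaussianReal 0 1)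
    (a : ℝ) (ha : 0 < a) (u v : Fin d → ℝ) :
    ∫ ω, sampleMean (proj a (B ω) u) * sampleMean (proj a (B ω) v)
      = a ^ 2 * k / d * (∑ n, u n * v n)
        + a ^ 2 * k * (k + 1) * (sampleMean u * sampleMean v) :=
  stmt5_general hd B hmeas hindep hgauss a u v
end

section
/- Let B be a k×d random matrix with i.i.d. N(0,1) entries and set a = (k(k+d))^{−1/2}, P = a BᵀB. Then for every non-random u ∈ ℝᵈ with μ_u = 0 and every index m: E[(Pu)_m] = (k/(k+d))^{1/2} u_m and Var((Pu)_m) = (u_m² + (d−1)σ_u²)/(d+k). -/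
/-!
Write `(BᵀB u)ₘ = ∑ⱼ Yⱼ` with `Yⱼ = Bⱼₘ ⟨Bⱼ, u⟩`; the `Yⱼ` depend on disjoint rows, hence are
independent. Splitting off the `m`-th coordinate, `Yⱼ = uₘ X² + X Z` where `X = Bⱼₘ` is standard
Gaussian and independent of `Z = ∑_{l ≠ m} u_l Bⱼₗ`. The Gaussian moments `E X = E X³ = 0`,
`E X² = 1`, `E X⁴ = 3` give `E Yⱼ = uₘ` and `Var Yⱼ = 2 uₘ² + E Z² = uₘ² + |u|²`. Summing over the
`k` rows and scaling by `a` gives the claim, since `(d - 1) σ_u² = |u|²` for `u` of mean zero.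
-/

open MeasureTheory ProbabilityTheory BigOperators Matrix

section GaussianMoments

open Polynomial Real

/-- `iteratedDeriv n (fun t ↦ exp (t ^ 2 / 2)) = (expSqHalfPoly n).eval t * exp (t ^ 2 / 2)`;
as `exp (t ^ 2 / 2)` is the moment generating function of `gaussianReal 0 1`, the moments of the
standard Gaussian are the values `(expSqHalfPoly n).eval 0`. -/
noncomputable def expSqHalfPoly : ℕ → ℝ[X]
  | 0 => 1
  | n + 1 => derivative (expSqHalfPoly n) + X * expSqHalfPoly n

lemma hasDerivAt_eval_mul_exp_sq_half (p : ℝ[X]) (t : ℝ) :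
    HasDerivAt (fun t ↦ p.eval t * exp (t ^ 2 / 2))
      ((derivative p + X * p).eval t * exp (t ^ 2 / 2)) t := by
  have hexp : HasDerivAt (fun t ↦ exp (t ^ 2 / 2)) (exp (t ^ 2 / 2) * t) t := by
    simpa using ((hasDerivAt_pow 2 t).div_const 2).exp
  refine ((p.hasDerivAt t).mul hexp).congr_deriv ?_
  rw [eval_add, eval_mul, eval_X]
  ring

lemma iteratedDeriv_exp_sq_half (n : ℕ) :
    iteratedDeriv n (fun t ↦ exp (t ^ 2 / 2)) =
      fun t ↦ (expSqHalfPoly n).eval t * exp (t ^ 2 / 2) := by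
  induction n with
  | zero => simp [expSqHalfPoly]
  | succ n ih =>
    rw [iteratedDeriv_succ, ih]
    exact funext fun t ↦ (hasDerivAt_eval_mul_exp_sq_half _ t).deriv

lemma integral_pow_gaussianReal_zero_one (n : ℕ) :
    ∫ x, x ^ n ∂gaussianReal 0 1 = (expSqHalfPoly n).eval 0 := by
  have h := iteratedDeriv_mgf_zero (X := id) (μ := gaussianReal 0 1) (by simp) n
  simp only [mgf_id_gaussianReal, zero_mul, zero_add, NNReal.coe_one, one_mul,
    iteratedDeriv_exp_sq_half] at h
  simpa using h.symm

end GaussianMoments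

lemma mul_sum_mul_eq_sq_add_mul_sum_erase {ι : Type*} [Fintype ι] [DecidableEq ι]
    (w u : ι → ℝ) (m : ι) :
    w m * ∑ l, w l * u l = u m * w m ^ 2 + w m * ∑ l ∈ Finset.univ.erase m, u l * w l := by
  rw [← Finset.add_sum_erase _ _ (Finset.mem_univ m)]
  simp_rw [mul_comm (w _) (u _)]
  ring

lemma MeasureTheory.MemLp.integrable_pow_of_le_two {Ω : Type*} {mΩ : MeasurableSpace Ω}
    {P : Measure Ω} [IsFiniteMeasure P] {Z : Ω → ℝ} (hZ : MemLp Z 2 P) {b : ℕ} (hb : b ≤ 2) :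
    Integrable (fun ω ↦ Z ω ^ b) P := by
  interval_cases b
  · simp
  · simpa using hZ.integrable one_le_two
  · exact hZ.integrable_sq

namespace ProbabilityTheory

variable {Ω : Type*} {mΩ : MeasurableSpace Ω} {P : Measure Ω}

section IndependentProduct

variable {X Z : Ω → ℝ}

lemma HasLaw.integrable_pow_of_gaussianReal (hX : HasLaw X (gaussianReal 0 1) P) (n : ℕ) :
    Integrable (fun ω ↦ X ω ^ n) P := by
  have h : Integrable (fun x : ℝ ↦ x ^ n) (gaussianReal 0 1) := by
    simpa using integrable_pow_of_mem_interior_integrableExpSet (X := id) (by simp) n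
  rw [← hX.map_eq] at h
  exact (integrable_map_measure (measurable_id.pow_const n).aestronglyMeasurable
    hX.aemeasurable).1 h

lemma HasLaw.memLp_two_of_gaussianReal (hX : HasLaw X (gaussianReal 0 1) P) : MemLp X 2 P :=
  (memLp_two_iff_integrable_sq hX.aemeasurable.aestronglyMeasurable).2
    (hX.integrable_pow_of_gaussianReal 2)

lemma HasLaw.integral_pow_of_gaussianReal (hX : HasLaw X (gaussianReal 0 1) P) (n : ℕ) :
    ∫ ω, X ω ^ n ∂P = (expSqHalfPoly n).eval 0 := by
  rw [← integral_pow_gaussianReal_zero_one]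
  exact hX.integral_comp (f := fun x ↦ x ^ n) (measurable_id.pow_const n).aestronglyMeasurable

lemma IndepFun.integral_pow_mul_pow (hXZ : IndepFun X Z P) (hX : AEMeasurable X P)
    (hZ : AEMeasurable Z P) (a b : ℕ) :
    ∫ ω, X ω ^ a * Z ω ^ b ∂P = (∫ ω, X ω ^ a ∂P) * ∫ ω, Z ω ^ b ∂P :=
  (hXZ.comp (measurable_id.pow_const a)
    (measurable_id.pow_const b)).integral_fun_mul_eq_mul_integral
      (hX.pow_const a).aestronglyMeasurable (hZ.pow_const b).aestronglyMeasurable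

lemma IndepFun.integrable_pow_mul_pow (hXZ : IndepFun X Z P) {a b : ℕ}
    (hXa : Integrable (fun ω ↦ X ω ^ a) P) (hZb : Integrable (fun ω ↦ Z ω ^ b) P) :
    Integrable (fun ω ↦ X ω ^ a * Z ω ^ b) P :=
  (hXZ.comp (measurable_id.pow_const a) (measurable_id.pow_const b)).integrable_mul hXa hZb

variable [IsProbabilityMeasure P] (hX : HasLaw X (gaussianReal 0 1) P) (hZ : MemLp Z 2 P)
  (hXZ : IndepFun X Z P)
include hX hZ hXZ

lemma IndepFun.integrable_and_integral_pow_mul_pow_of_gaussianReal (a : ℕ) {b : ℕ} (hb : b ≤ 2) :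
    Integrable (fun ω ↦ X ω ^ a * Z ω ^ b) P ∧
      ∫ ω, X ω ^ a * Z ω ^ b ∂P = (expSqHalfPoly a).eval 0 * ∫ ω, Z ω ^ b ∂P :=
  ⟨hXZ.integrable_pow_mul_pow (hX.integrable_pow_of_gaussianReal a)
      (hZ.integrable_pow_of_le_two hb),
    by rw [hXZ.integral_pow_mul_pow hX.aemeasurable hZ.aemeasurable,
      hX.integral_pow_of_gaussianReal]⟩

lemma integral_const_mul_sq_add_mul_of_gaussianReal (c : ℝ) :
    ∫ ω, c * X ω ^ 2 + X ω * Z ω ∂P = c := by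
  obtain ⟨h2i, h2⟩ := hXZ.integrable_and_integral_pow_mul_pow_of_gaussianReal hX hZ
    2 (b := 0) (by norm_num)
  obtain ⟨h1i, h1⟩ := hXZ.integrable_and_integral_pow_mul_pow_of_gaussianReal hX hZ
    1 (b := 1) (by norm_num)
  have hexpand : (fun ω ↦ c * X ω ^ 2 + X ω * Z ω) =
      fun ω ↦ c * (X ω ^ 2 * Z ω ^ 0) + X ω ^ 1 * Z ω ^ 1 := by
    ext ω; ring
  rw [hexpand, integral_add (h2i.const_mul _) h1i, integral_const_mul, h2, h1]
  simp [expSqHalfPoly]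

lemma integral_const_mul_sq_add_mul_sq_of_gaussianReal (c : ℝ) :
    ∫ ω, (c * X ω ^ 2 + X ω * Z ω) ^ 2 ∂P = 3 * c ^ 2 + ∫ ω, Z ω ^ 2 ∂P := by
  obtain ⟨h4i, h4⟩ := hXZ.integrable_and_integral_pow_mul_pow_of_gaussianReal hX hZ
    4 (b := 0) (by norm_num)
  obtain ⟨h3i, h3⟩ := hXZ.integrable_and_integral_pow_mul_pow_of_gaussianReal hX hZ
    3 (b := 1) (by norm_num)
  obtain ⟨h2i, h2⟩ := hXZ.integrable_and_integral_pow_mul_pow_of_gaussianReal hX hZ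
    2 (b := 2) le_rfl
  have hexpand : (fun ω ↦ (c * X ω ^ 2 + X ω * Z ω) ^ 2) = fun ω ↦
      X ω ^ 4 * Z ω ^ 0 * c ^ 2 + X ω ^ 3 * Z ω ^ 1 * (2 * c) + X ω ^ 2 * Z ω ^ 2 := by
    ext ω; ring
  rw [hexpand, integral_add ((h4i.mul_const _).fun_add (h3i.mul_const _)) h2i,
    integral_add (h4i.mul_const _) (h3i.mul_const _), integral_mul_const, integral_mul_const,
    h4, h3, h2]
  norm_num [expSqHalfPoly]

lemma memLp_two_const_mul_sq_add_mul_of_gaussianReal (c : ℝ) :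
    MemLp (fun ω ↦ c * X ω ^ 2 + X ω * Z ω) 2 P := by
  have hXm := hX.aemeasurable
  have hsq : MemLp (fun ω ↦ c * X ω ^ 2) 2 P := by
    refine (memLp_two_iff_integrable_sq (by fun_prop)).2 ?_
    simpa [mul_pow, ← pow_mul] using (hX.integrable_pow_of_gaussianReal 4).const_mul (c ^ 2)
  have hmul : MemLp (fun ω ↦ X ω * Z ω) 2 P := by
    refine (memLp_two_iff_integrable_sq (hXm.mul hZ.aemeasurable).aestronglyMeasurable).2 ?_
    simpa [mul_pow] using
      (hXZ.integrable_and_integral_pow_mul_pow_of_gaussianReal hX hZ 2 le_rfl).1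
  exact hsq.add hmul

lemma variance_const_mul_sq_add_mul_of_gaussianReal (c : ℝ) :
    Var[fun ω ↦ c * X ω ^ 2 + X ω * Z ω; P] = 2 * c ^ 2 + ∫ ω, Z ω ^ 2 ∂P := by
  rw [variance_eq_sub (memLp_two_const_mul_sq_add_mul_of_gaussianReal hX hZ hXZ c)]
  simp only [Pi.pow_apply]
  rw [integral_const_mul_sq_add_mul_sq_of_gaussianReal hX hZ hXZ,
    integral_const_mul_sq_add_mul_of_gaussianReal hX hZ hXZ]
  ring

end IndependentProduct

section Independence

variable {ι : Type*}

lemma iIndepFun.indepFun_finsetSum_const_mul_of_notMem {W : ι → Ω → ℝ} (hW : iIndepFun W P)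
    (hWm : ∀ i, AEMeasurable (W i) P) {s : Finset ι} {i : ι} (hi : i ∉ s) (u : ι → ℝ) :
    IndepFun (W i) (fun ω ↦ ∑ l ∈ s, u l * W l ω) P := by
  classical
  have hφ : Measurable fun v : ({i} : Finset ι) → ℝ ↦ v ⟨i, Finset.mem_singleton_self i⟩ :=
    measurable_pi_apply _
  have hψ : Measurable fun v : s → ℝ ↦ ∑ l : s, u l * v l := by fun_prop
  have hsum : (fun ω ↦ ∑ l ∈ s, u l * W l ω) =
      (fun v : s → ℝ ↦ ∑ l : s, u l * v l) ∘ fun ω (l : s) ↦ W l ω := by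
    ext ω
    exact (Finset.sum_coe_sort s fun l ↦ u l * W l ω).symm
  rw [hsum]
  exact (hW.indepFun_finset₀ {i} s (Finset.disjoint_singleton_left.2 hi) hWm).comp hφ hψ

lemma iIndepFun.indepFun_row {κ : Type*} [Fintype κ] {X : ι × κ → Ω → ℝ} (hX : iIndepFun X P)
    (hXm : ∀ p, AEMeasurable (X p) P) {i i' : ι} (hii' : i ≠ i') :
    IndepFun (fun ω l ↦ X (i, l) ω) (fun ω l ↦ X (i', l) ω) P := by
  classical
  let row (i : ι) : (({i} ×ˢ Finset.univ : Finset (ι × κ)) → ℝ) → κ → ℝ :=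
    fun v l ↦ v ⟨(i, l), by simp⟩
  have hrow (i : ι) : Measurable (row i) := measurable_pi_lambda _ fun _ ↦ measurable_pi_apply _
  exact (hX.indepFun_finset₀ _ _ (Finset.disjoint_product.2 (.inl
    (Finset.disjoint_singleton.2 hii'))) hXm).comp (hrow i) (hrow i')

end Independence

section LinearCombination

variable {ι : Type*} {W : ι → Ω → ℝ}
  (hWlaw : ∀ i, HasLaw (W i) (gaussianReal 0 1) P) (s : Finset ι) (u : ι → ℝ)
include hWlaw

lemma memLp_two_finsetSum_const_mul_of_gaussianReal :
    MemLp (fun ω ↦ ∑ l ∈ s, u l * W l ω) 2 P :=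
  memLp_finsetSum s fun l _ ↦ (hWlaw l).memLp_two_of_gaussianReal.const_mul (u l)

lemma integral_finsetSum_const_mul_of_gaussianReal [IsFiniteMeasure P] :
    ∫ ω, ∑ l ∈ s, u l * W l ω ∂P = 0 := by
  rw [integral_finsetSum _ fun l _ ↦
    ((hWlaw l).memLp_two_of_gaussianReal.integrable one_le_two).const_mul (u l)]
  refine Finset.sum_eq_zero fun l _ ↦ ?_
  rw [integral_const_mul, (hWlaw l).integral_eq, integral_id_gaussianReal, mul_zero]

lemma variance_finsetSum_const_mul_of_gaussianReal
    (hW : Set.Pairwise s fun i j ↦ IndepFun (W i) (W j) P) :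
    Var[fun ω ↦ ∑ l ∈ s, u l * W l ω; P] = ∑ l ∈ s, u l ^ 2 := by
  have hsum : (fun ω ↦ ∑ l ∈ s, u l * W l ω) = ∑ l ∈ s, fun ω ↦ u l * W l ω := by
    ext ω; simp
  rw [hsum, IndepFun.variance_sum
    (fun l _ ↦ (hWlaw l).memLp_two_of_gaussianReal.const_mul (u l)) fun i hi j hj hij ↦
      (hW hi hj hij).comp (measurable_const_mul (u i)) (measurable_const_mul (u j))]
  refine Finset.sum_congr rfl fun l _ ↦ ?_
  rw [variance_const_mul, (hWlaw l).variance_eq, variance_id_gaussianReal, NNReal.coe_one,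
    mul_one]

lemma integral_finsetSum_const_mul_sq_of_gaussianReal [IsProbabilityMeasure P]
    (hW : Set.Pairwise s fun i j ↦ IndepFun (W i) (W j) P) :
    ∫ ω, (∑ l ∈ s, u l * W l ω) ^ 2 ∂P = ∑ l ∈ s, u l ^ 2 := by
  have h := variance_eq_sub (memLp_two_finsetSum_const_mul_of_gaussianReal hWlaw s u)
  rw [variance_finsetSum_const_mul_of_gaussianReal hWlaw s u hW,
    integral_finsetSum_const_mul_of_gaussianReal hWlaw s u] at h
  simp only [Pi.pow_apply] at h
  linarith

end LinearCombination

section GaussianRow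

variable [IsProbabilityMeasure P] {ι : Type*} [Fintype ι] [DecidableEq ι] {W : ι → Ω → ℝ}
  (hW : iIndepFun W P) (hWlaw : ∀ i, HasLaw (W i) (gaussianReal 0 1) P) (u : ι → ℝ) (m : ι)
include hW hWlaw

lemma integral_mul_sum_mul_of_gaussianReal :
    ∫ ω, W m ω * ∑ l, W l ω * u l ∂P = u m := by
  rw [funext fun ω ↦ mul_sum_mul_eq_sq_add_mul_sum_erase (W · ω) u m]
  exact integral_const_mul_sq_add_mul_of_gaussianReal (hWlaw m)
    (memLp_two_finsetSum_const_mul_of_gaussianReal hWlaw _ u)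
    (hW.indepFun_finsetSum_const_mul_of_notMem (fun i ↦ (hWlaw i).aemeasurable)
      (Finset.notMem_erase m _) u) _

lemma memLp_two_mul_sum_mul_of_gaussianReal :
    MemLp (fun ω ↦ W m ω * ∑ l, W l ω * u l) 2 P := by
  rw [funext fun ω ↦ mul_sum_mul_eq_sq_add_mul_sum_erase (W · ω) u m]
  exact memLp_two_const_mul_sq_add_mul_of_gaussianReal (hWlaw m)
    (memLp_two_finsetSum_const_mul_of_gaussianReal hWlaw _ u)
    (hW.indepFun_finsetSum_const_mul_of_notMem (fun i ↦ (hWlaw i).aemeasurable)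
      (Finset.notMem_erase m _) u) _

lemma variance_mul_sum_mul_of_gaussianReal :
    Var[fun ω ↦ W m ω * ∑ l, W l ω * u l; P] = u m ^ 2 + ∑ l, u l ^ 2 := by
  rw [funext fun ω ↦ mul_sum_mul_eq_sq_add_mul_sum_erase (W · ω) u m]
  rw [variance_const_mul_sq_add_mul_of_gaussianReal (hWlaw m)
    (memLp_two_finsetSum_const_mul_of_gaussianReal hWlaw _ u)
    (hW.indepFun_finsetSum_const_mul_of_notMem (fun i ↦ (hWlaw i).aemeasurable)
      (Finset.notMem_erase m _) u),
    integral_finsetSum_const_mul_sq_of_gaussianReal hWlaw _ u fun i _ j _ hij ↦ hW.indepFun hij,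
    ← Finset.add_sum_erase _ _ (Finset.mem_univ m)]
  ring

end GaussianRow

end ProbabilityTheory

lemma sub_one_mul_sampleCov_self {d : ℕ} (hd : d ≠ 1) {u : Fin d → ℝ} (hu : sampleMean u = 0) :
    ((d : ℝ) - 1) * sampleCov u u = ∑ l, u l ^ 2 := by
  have hd' : (d : ℝ) - 1 ≠ 0 := sub_ne_zero.2 (by exact_mod_cast hd)
  simp [sampleCov, hu, mul_div_cancel₀ _ hd', sq]

lemma proj_apply {k d : ℕ} (a : ℝ) (B : Matrix (Fin k) (Fin d) ℝ) (u : Fin d → ℝ) (m : Fin d) :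
    proj a B u m = a * ∑ j, B j m * ∑ l, B j l * u l := by
  simp [proj, ← mulVec_mulVec, mulVec, dotProduct]

section GaussianMatrix

variable {Ω : Type*} {mΩ : MeasurableSpace Ω} {P : Measure Ω} [IsProbabilityMeasure P] {k d : ℕ}
  {B : Ω → Matrix (Fin k) (Fin d) ℝ} (hB : iIndepFun (fun (p : Fin k × Fin d) ω ↦ B ω p.1 p.2) P)
  (hBlaw : ∀ j l, HasLaw (fun ω ↦ B ω j l) (gaussianReal 0 1) P) (a : ℝ) (u : Fin d → ℝ)
  (m : Fin d)
include hB hBlaw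

lemma integral_proj_apply_of_gaussianReal :
    ∫ ω, proj a (B ω) u m ∂P = a * k * u m := by
  simp_rw [proj_apply]
  rw [integral_const_mul, integral_finsetSum _ fun j _ ↦
    ((memLp_two_mul_sum_mul_of_gaussianReal (hB.precomp (Prod.mk_right_injective j))
      (hBlaw j) u m).integrable one_le_two)]
  simp_rw [integral_mul_sum_mul_of_gaussianReal (hB.precomp (Prod.mk_right_injective _))
    (hBlaw _) u m]
  simp only [Finset.sum_const, Finset.card_univ, Fintype.card_fin, nsmul_eq_mul]
  ring

lemma variance_proj_apply_of_gaussianReal :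
    Var[fun ω ↦ proj a (B ω) u m; P] = a ^ 2 * k * (u m ^ 2 + ∑ l, u l ^ 2) := by
  have hrow (j : Fin k) := hB.precomp (Prod.mk_right_injective j)
  have hφ : Measurable fun v : Fin d → ℝ ↦ v m * ∑ l, v l * u l := by fun_prop
  have hsum : (fun ω ↦ ∑ j, B ω j m * ∑ l, B ω j l * u l) =
      ∑ j, fun ω ↦ B ω j m * ∑ l, B ω j l * u l := by
    ext ω; simp
  simp_rw [proj_apply]
  rw [variance_const_mul, hsum, IndepFun.variance_sum
    (fun j _ ↦ memLp_two_mul_sum_mul_of_gaussianReal (hrow j) (hBlaw j) u m)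
    fun i _ j _ hij ↦ (hB.indepFun_row (fun p ↦ (hBlaw p.1 p.2).aemeasurable) hij).comp hφ hφ]
  simp_rw [variance_mul_sum_mul_of_gaussianReal (hrow _) (hBlaw _) u m]
  simp only [Finset.sum_const, Finset.card_univ, Fintype.card_fin, nsmul_eq_mul]
  ring

end GaussianMatrix

theorem stmt10
    {Ω : Type} [MeasureSpace Ω] [IsProbabilityMeasure (ℙ : Measure Ω)]
    {k d : ℕ} (hk : 1 ≤ k) (hd : 4 ≤ d)
    (B : Ω → Matrix (Fin k) (Fin d) ℝ)
    (hmeas : ∀ j m, Measurable fun ω => B ω j m)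
    (hindep : iIndepFun
      (fun (p : Fin k × Fin d) ω => B ω p.1 p.2) ℙ)
    (hgauss : ∀ j m, Measure.map (fun ω => B ω j m) ℙ = gaussianReal 0 1)
    (u : Fin d → ℝ) (hu : sampleMean u = 0) (m : Fin d) :
    (∫ ω, proj (1 / Real.sqrt (k * (k + d))) (B ω) u m
        = Real.sqrt ((k : ℝ) / (k + d)) * u m)
    ∧ variance (fun ω => proj (1 / Real.sqrt (k * (k + d))) (B ω) u m) ℙ
        = ((u m) ^ 2 + ((d : ℝ) - 1) * sampleCov u u) / ((d : ℝ) + k) := by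
  have hBlaw (j : Fin k) (l : Fin d) : HasLaw (fun ω ↦ B ω j l) (gaussianReal 0 1) ℙ :=
    ⟨(hmeas j l).aemeasurable, hgauss j l⟩
  have hk0 : (0 : ℝ) < k := by exact_mod_cast hk
  refine ⟨?_, ?_⟩
  · rw [integral_proj_apply_of_gaussianReal hindep hBlaw, Real.sqrt_div hk0.le,
      Real.sqrt_mul hk0.le]
    field_simp
    rw [Real.sq_sqrt hk0.le]
  · rw [variance_proj_apply_of_gaussianReal hindep hBlaw, sub_one_mul_sampleCov_self (by omega) hu,
      div_pow, one_pow, Real.sq_sqrt (by positivity)]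
    field_simp
    ring
end

section
/- Let B_{jm} be i.i.d. real random variables with mean 0, variance c₂, and excess kurtosis b₄ = c₄/c₂², and P = a BᵀB. Then for non-random u, v ∈ ℝᵈ, E[C_{Pu,Pv}] = c₂² a² k [ (d+k) C_{u,v} + d μ_u μ_v + b₄ (1 − 1/d)( C_{u,v} + (d/(d−1)) μ_u μ_v ) ]; in particular, for μ_u = μ_v = 0, the choice a = (c₂² k (d + k + b₄(1−1/d)))^{−1/2} makes E[C_{Pu,Pv}] = C_{u,v}. -/
open MeasureTheory ProbabilityTheory BigOperators Matrix

/-! Writing `(BᵀB u)_m = ∑_{j,n} B_{jm} B_{jn} u_n`, every second moment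
`E[(BᵀB u)_m (BᵀB v)_{m'}]` is a sum of fourth moments `E[B_p B_q B_r B_s]` of the entries.
By independence and centring such a moment vanishes unless the indices pair up, which gives
`c₂² (δ_pq δ_rs + δ_pr δ_qs + δ_ps δ_qr) + c₄ δ_pq δ_pr δ_ps`. The sample covariance is a
bilinear form, so its expectation is that form applied to the matrix of second moments, and
summing out the Kronecker deltas gives the formula. -/

open Finset

section FourthMoment

variable {Ω ι : Type*} {mΩ : MeasurableSpace Ω} {μ : Measure Ω} {X : ι → Ω → ℝ}

lemma integrable_mul_mul_mul_of_memLp_four_s19 (hX : ∀ i, MemLp (X i) 4 μ) (p q r s : ι) :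
    Integrable (fun ω => X p ω * X q ω * X r ω * X s ω) μ := by
  have h := MemLp.prod' (s := univ) (f := ![X p, X q, X r, X s]) (p := fun _ => 4)
    fun i _ => by fin_cases i <;> exact hX _
  have h4 : (∑ _i : Fin 4, (4 : ENNReal)⁻¹)⁻¹ = 1 := by
    rw [sum_const, card_univ, Fintype.card_fin, nsmul_eq_mul, Nat.cast_ofNat,
      ENNReal.mul_inv_cancel (by norm_num) (by norm_num), inv_one]
  rw [h4, memLp_one_iff_integrable] at h
  simpa [Fin.prod_univ_four, mul_assoc] using h

lemma integral_mul_mul_mul_eq_zero_of_ne (hindep : iIndepFun X μ)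
    (hX : ∀ i, AEMeasurable (X i) μ) {p q r t : ι} (hpt : p ≠ t) (hqt : q ≠ t) (hrt : r ≠ t)
    (ht : ∫ ω, X t ω ∂μ = 0) :
    ∫ ω, X p ω * X q ω * X r ω * X t ω ∂μ = 0 := by
  classical
  have hdisj : Disjoint ({p, q, r} : Finset ι) {t} := by simp [hpt.symm, hqt.symm, hrt.symm]
  have hind : IndepFun (fun ω => X p ω * X q ω * X r ω) (X t) μ :=
    (hindep.indepFun_finset₀ _ _ hdisj hX).comp
      (φ := fun x : ({p, q, r} : Finset ι) → ℝ => x ⟨p, by simp⟩ * x ⟨q, by simp⟩ * x ⟨r, by simp⟩)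
      (ψ := fun x : ({t} : Finset ι) → ℝ => x ⟨t, by simp⟩) (by fun_prop) (by fun_prop)
  have := hind.integral_mul_eq_mul_integral
    (((hX p).mul (hX q)).mul (hX r)).aestronglyMeasurable (hX t).aestronglyMeasurable
  simpa [ht] using this

lemma integral_mul_self_mul_mul_self_of_ne (hindep : iIndepFun X μ)
    (hX : ∀ i, AEMeasurable (X i) μ) {p r : ι} (hpr : p ≠ r) :
    ∫ ω, X p ω * X p ω * (X r ω * X r ω) ∂μ
      = (∫ ω, X p ω ^ 2 ∂μ) * ∫ ω, X r ω ^ 2 ∂μ := by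
  have := (hindep.indepFun_mul_mul₀ hX p p r r hpr hpr hpr hpr).integral_mul_eq_mul_integral
    ((hX p).mul (hX p)).aestronglyMeasurable ((hX r).mul (hX r)).aestronglyMeasurable
  simpa [sq] using this

lemma integral_mul_mul_mul_eq_of_iIndepFun [DecidableEq ι] (hindep : iIndepFun X μ)
    (hX : ∀ i, AEMeasurable (X i) μ) {c₂ c₄ : ℝ} (hmean : ∀ i, ∫ ω, X i ω ∂μ = 0)
    (hvar : ∀ i, ∫ ω, X i ω ^ 2 ∂μ = c₂) (hfour : ∀ i, ∫ ω, X i ω ^ 4 ∂μ = 3 * c₂ ^ 2 + c₄)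
    (p q r s : ι) :
    ∫ ω, X p ω * X q ω * X r ω * X s ω ∂μ =
      c₂ ^ 2 * ((if p = q then 1 else 0) * (if r = s then 1 else 0)
        + (if p = r then 1 else 0) * (if q = s then 1 else 0)
        + (if p = s then 1 else 0) * (if q = r then 1 else 0))
      + c₄ * ((if p = q then 1 else 0) * (if p = r then 1 else 0) * (if p = s then 1 else 0)) := by
  have hpair : ∀ a b, ∫ ω, X a ω * X a ω * (X b ω * X b ω) ∂μ
      = if a = b then 3 * c₂ ^ 2 + c₄ else c₂ ^ 2 := by
    intro a b
    split_ifs with hab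
    · subst hab
      rw [← hfour]; congr 1; ext ω; ring
    · rw [integral_mul_self_mul_mul_self_of_ne hindep hX hab, hvar, hvar, sq]
  have hzero : ∀ {a b c t}, a ≠ t → b ≠ t → c ≠ t →
      ∫ ω, X a ω * X b ω * X c ω * X t ω ∂μ = 0 := fun hat hbt hct =>
    integral_mul_mul_mul_eq_zero_of_ne hindep hX hat hbt hct (hmean _)
  -- an index occurring exactly once kills the moment; otherwise the indices pair up
  by_cases hs : p ≠ s ∧ q ≠ s ∧ r ≠ s
  · rw [hzero hs.1 hs.2.1 hs.2.2]
    simp [hs.1, hs.2.1, hs.2.2]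
  by_cases hr : p ≠ r ∧ q ≠ r ∧ s ≠ r
  · calc _ = ∫ ω, X p ω * X q ω * X s ω * X r ω ∂μ := by congr 1; ext ω; ring
      _ = 0 := hzero hr.1 hr.2.1 hr.2.2
      _ = _ := by simp [hr.1, hr.2.1, Ne.symm hr.2.2]
  by_cases hq : p ≠ q ∧ r ≠ q ∧ s ≠ q
  · calc _ = ∫ ω, X p ω * X r ω * X s ω * X q ω ∂μ := by congr 1; ext ω; ring
      _ = 0 := hzero hq.1 hq.2.1 hq.2.2
      _ = _ := by simp [hq.1, Ne.symm hq.2.1, Ne.symm hq.2.2]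
  by_cases hp : q ≠ p ∧ r ≠ p ∧ s ≠ p
  · calc _ = ∫ ω, X q ω * X r ω * X s ω * X p ω ∂μ := by congr 1; ext ω; ring
      _ = 0 := hzero hp.1 hp.2.1 hp.2.2
      _ = _ := by simp [Ne.symm hp.1, Ne.symm hp.2.1, Ne.symm hp.2.2]
  have paired : (p = q ∧ r = s) ∨ (p = r ∧ q = s) ∨ (p = s ∧ q = r) := by grind
  rcases paired with ⟨rfl, rfl⟩ | ⟨rfl, rfl⟩ | ⟨rfl, rfl⟩
  · calc _ = ∫ ω, X p ω * X p ω * (X r ω * X r ω) ∂μ := by congr 1; ext ω; ring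
      _ = _ := by rw [hpair]; simp only [↓reduceIte]; split_ifs <;> ring
  · calc _ = ∫ ω, X p ω * X p ω * (X q ω * X q ω) ∂μ := by congr 1; ext ω; ring
      _ = _ := by rw [hpair]; simp only [eq_comm (a := q) (b := p)]; split_ifs <;> ring
  · calc _ = ∫ ω, X p ω * X p ω * (X q ω * X q ω) ∂μ := by congr 1; ext ω; ring
      _ = _ := by rw [hpair]; simp only [eq_comm (a := q) (b := p)]; split_ifs <;> ring

end FourthMoment

section GramMatrix

variable {Ω κ ι : Type*} [Fintype κ] [Fintype ι] {mΩ : MeasurableSpace Ω} {μ : Measure Ω}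
  {B : Ω → Matrix κ ι ℝ}

lemma transpose_mul_self_mulVec_apply (A : Matrix κ ι ℝ) (u : ι → ℝ) (m : ι) :
    ((Aᵀ * A) *ᵥ u) m = ∑ j, ∑ n, A j m * A j n * u n := by
  simp only [mulVec, dotProduct, mul_apply, transpose_apply, sum_mul]
  exact sum_comm

lemma transpose_mul_self_mulVec_mul_apply (A : Matrix κ ι ℝ) (u v : ι → ℝ) (m m' : ι) :
    ((Aᵀ * A) *ᵥ u) m * ((Aᵀ * A) *ᵥ v) m'
      = ∑ j, ∑ n, ∑ j', ∑ n', u n * v n' * (A j m * A j n * A j' m' * A j' n') := by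
  simp_rw [transpose_mul_self_mulVec_apply, sum_mul, mul_sum]
  exact sum_congr rfl fun _ _ => sum_congr rfl fun _ _ =>
    sum_congr rfl fun _ _ => sum_congr rfl fun _ _ => by ring

lemma integrable_transpose_mul_self_mulVec_mul_apply
    (hB : ∀ j n, MemLp (fun ω => B ω j n) 4 μ) (u v : ι → ℝ) (m m' : ι) :
    Integrable (fun ω => (((B ω)ᵀ * B ω) *ᵥ u) m * (((B ω)ᵀ * B ω) *ᵥ v) m') μ := by
  simp only [transpose_mul_self_mulVec_mul_apply]
  refine integrable_finsetSum _ fun j _ => integrable_finsetSum _ fun n _ =>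
    integrable_finsetSum _ fun j' _ => integrable_finsetSum _ fun n' _ => ?_
  exact (integrable_mul_mul_mul_of_memLp_four_s19 (X := fun p : κ × ι => fun ω => B ω p.1 p.2)
    (fun p => hB p.1 p.2) (j, m) (j, n) (j', m') (j', n')).const_mul _

lemma integral_transpose_mul_self_mulVec_mul_apply [DecidableEq κ] [DecidableEq ι]
    (hindep : iIndepFun (fun p : κ × ι => fun ω => B ω p.1 p.2) μ)
    (hB : ∀ j n, MemLp (fun ω => B ω j n) 4 μ) {c₂ c₄ : ℝ}
    (hmean : ∀ j n, ∫ ω, B ω j n ∂μ = 0) (hvar : ∀ j n, ∫ ω, B ω j n ^ 2 ∂μ = c₂)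
    (hfour : ∀ j n, ∫ ω, B ω j n ^ 4 ∂μ = 3 * c₂ ^ 2 + c₄) (u v : ι → ℝ) (m m' : ι) :
    ∫ ω, (((B ω)ᵀ * B ω) *ᵥ u) m * (((B ω)ᵀ * B ω) *ᵥ v) m' ∂μ
      = c₂ ^ 2 * (Fintype.card κ ^ 2 * u m * v m'
          + Fintype.card κ * (if m = m' then ∑ n, u n * v n else 0) + Fintype.card κ * u m' * v m)
        + c₄ * Fintype.card κ * (if m = m' then u m * v m else 0) := by
  have hint : ∀ j n j' n',
      Integrable (fun ω => u n * v n' * (B ω j m * B ω j n * B ω j' m' * B ω j' n')) μ :=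
    fun j n j' n' => (integrable_mul_mul_mul_of_memLp_four_s19
      (X := fun p : κ × ι => fun ω => B ω p.1 p.2) (fun p => hB p.1 p.2)
      (j, m) (j, n) (j', m') (j', n')).const_mul _
  have hmoment := integral_mul_mul_mul_eq_of_iIndepFun hindep (fun p => (hB p.1 p.2).aemeasurable)
    (fun p => hmean p.1 p.2) (fun p => hvar p.1 p.2) (fun p => hfour p.1 p.2)
  simp_rw [transpose_mul_self_mulVec_mul_apply]
  calc _ = ∑ j, ∑ n, ∑ j', ∑ n',
        u n * v n' * ∫ ω, B ω j m * B ω j n * B ω j' m' * B ω j' n' ∂μ := by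
        rw [integral_finsetSum _ fun j _ => integrable_finsetSum _ fun n _ =>
          integrable_finsetSum _ fun j' _ => integrable_finsetSum _ fun n' _ => hint j n j' n']
        refine sum_congr rfl fun j _ => ?_
        rw [integral_finsetSum _ fun n _ => integrable_finsetSum _ fun j' _ =>
          integrable_finsetSum _ fun n' _ => hint j n j' n']
        refine sum_congr rfl fun n _ => ?_
        rw [integral_finsetSum _ fun j' _ => integrable_finsetSum _ fun n' _ => hint j n j' n']
        refine sum_congr rfl fun j' _ => ?_
        rw [integral_finsetSum _ fun n' _ => hint j n j' n']
        exact sum_congr rfl fun n' _ => integral_const_mul _ _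
    _ = _ := by
        simp only [fun j n j' n' => hmoment (j, m) (j, n) (j', m') (j', n'), Prod.mk.injEq, true_and,
          ite_and, mul_add, sum_add_distrib]
        simp only [mul_ite, mul_one, mul_zero, sum_ite_eq, mem_univ, ↓reduceIte, sum_ite_irrel,
          sum_const, card_univ, nsmul_eq_mul, sum_ite_eq']
        rw [← sum_mul]
        split_ifs <;> ring

end GramMatrix

section SampleCovariance

variable {d : ℕ}

lemma sampleCov_eq (x y : Fin d → ℝ) :
    sampleCov x y = (∑ m, x m * y m - (∑ m, x m) * (∑ m, y m) / d) / (d - 1) := by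
  rcases Nat.eq_zero_or_pos d with rfl | hd
  · simp [sampleCov]
  have hd' : (d : ℝ) ≠ 0 := by positivity
  simp only [sampleCov, sampleMean, sub_mul, mul_sub, sum_sub_distrib, ← sum_mul, ← mul_sum,
    sum_const, card_univ, Fintype.card_fin, nsmul_eq_mul]
  field_simp
  ring

lemma integral_sampleCov {Ω : Type*} {mΩ : MeasurableSpace Ω} {μ : Measure Ω}
    {X Y : Ω → Fin d → ℝ} (hXY : ∀ m m', Integrable (fun ω => X ω m * Y ω m') μ) :
    ∫ ω, sampleCov (X ω) (Y ω) ∂μ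
      = (∑ m, ∫ ω, X ω m * Y ω m ∂μ - (∑ m, ∑ m', ∫ ω, X ω m * Y ω m' ∂μ) / d) / (d - 1) := by
  simp_rw [sampleCov_eq, sum_mul_sum]
  rw [integral_div, integral_sub (integrable_finsetSum _ fun m _ => hXY m m)
    ((integrable_finsetSum _ fun m _ => integrable_finsetSum _ fun m' _ => hXY m m').div_const _),
    integral_div, integral_finsetSum _ fun m _ => hXY m m,
    integral_finsetSum _ fun m _ => integrable_finsetSum _ fun m' _ => hXY m m']
  simp_rw [integral_finsetSum _ fun m' _ => hXY _ m']

end SampleCovariance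

section RandomProjection

variable {Ω : Type*} {mΩ : MeasurableSpace Ω} {μ : Measure Ω} {k d : ℕ}
  {B : Ω → Matrix (Fin k) (Fin d) ℝ}

lemma proj_apply_mul_proj_apply (a : ℝ) (A : Matrix (Fin k) (Fin d) ℝ) (u v : Fin d → ℝ)
    (m m' : Fin d) :
    proj a A u m * proj a A v m' = a ^ 2 * (((Aᵀ * A) *ᵥ u) m * ((Aᵀ * A) *ᵥ v) m') := by
  simp only [proj, Pi.smul_apply, smul_eq_mul]
  ring

lemma integral_sampleCov_proj (hd : 1 < d)
    (hindep : iIndepFun (fun (p : Fin k × Fin d) ω => B ω p.1 p.2) μ)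
    (hB : ∀ j n, MemLp (fun ω => B ω j n) 4 μ) {c₂ c₄ : ℝ}
    (hmean : ∀ j n, ∫ ω, B ω j n ∂μ = 0) (hvar : ∀ j n, ∫ ω, B ω j n ^ 2 ∂μ = c₂)
    (hfour : ∀ j n, ∫ ω, B ω j n ^ 4 ∂μ = 3 * c₂ ^ 2 + c₄) (a : ℝ) (u v : Fin d → ℝ) :
    ∫ ω, sampleCov (proj a (B ω) u) (proj a (B ω) v) ∂μ
      = a ^ 2 * k * (c₂ ^ 2 * ((d + k) * sampleCov u v + d * (sampleMean u * sampleMean v))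
          + c₄ * ((1 - 1 / d) * sampleCov u v + sampleMean u * sampleMean v)) := by
  have hd1 : (d : ℝ) - 1 ≠ 0 := sub_ne_zero.mpr (by exact_mod_cast hd.ne')
  rw [integral_sampleCov fun m m' => by simpa only [proj_apply_mul_proj_apply] using
    (integrable_transpose_mul_self_mulVec_mul_apply hB u v m m').const_mul (a ^ 2)]
  simp only [proj_apply_mul_proj_apply, integral_const_mul,
    integral_transpose_mul_self_mulVec_mul_apply hindep hB hmean hvar hfour]
  simp only [Fintype.card_fin, mul_add, sum_add_distrib, mul_ite, mul_zero,
    sum_ite_eq, mem_univ, ↓reduceIte, sum_const, card_univ, nsmul_eq_mul,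
    mul_assoc, ← mul_sum, ← sum_mul]
  rw [sampleCov_eq]
  simp only [sampleMean]
  field_simp
  ring

end RandomProjection

theorem stmt19_general
    {Ω : Type} [MeasureSpace Ω]
    {k d : ℕ} (hd : 2 ≤ d)
    (B : Ω → Matrix (Fin k) (Fin d) ℝ)
    (hindep : iIndepFun
      (fun (p : Fin k × Fin d) ω => B ω p.1 p.2) ℙ)
    (hL4 : ∀ j m, MemLp (fun ω => B ω j m) 4 ℙ)
    (c₂ c₄ : ℝ) (hc₂ : 0 < c₂)
    (hmean : ∀ j m, ∫ ω, B ω j m = 0)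
    (hvar : ∀ j m, ∫ ω, (B ω j m) ^ 2 = c₂)
    (hfour : ∀ j m, ∫ ω, (B ω j m) ^ 4 = 3 * c₂ ^ 2 + c₄)
    (a : ℝ) (ha : 0 < a) (u v : Fin d → ℝ) :
    (∫ ω, sampleCov (proj a (B ω) u) (proj a (B ω) v)
        = c₂ ^ 2 * a ^ 2 * k * (((d : ℝ) + k) * sampleCov u v
            + d * (sampleMean u * sampleMean v)
            + (c₄ / c₂ ^ 2) * (1 - 1 / d)
              * (sampleCov u v + (d / ((d : ℝ) - 1)) * (sampleMean u * sampleMean v))))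
    ∧ (sampleMean u = 0 → sampleMean v = 0 →
        a = 1 / Real.sqrt (c₂ ^ 2 * k * ((d : ℝ) + k + (c₄ / c₂ ^ 2) * (1 - 1 / d))) →
        ∫ ω, sampleCov (proj a (B ω) u) (proj a (B ω) v) = sampleCov u v) := by
  have hd1 : (d : ℝ) - 1 ≠ 0 := sub_ne_zero.mpr (by norm_cast; omega)
  have hmain : ∫ ω, sampleCov (proj a (B ω) u) (proj a (B ω) v)
      = c₂ ^ 2 * a ^ 2 * k * (((d : ℝ) + k) * sampleCov u v
          + d * (sampleMean u * sampleMean v)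
          + (c₄ / c₂ ^ 2) * (1 - 1 / d)
            * (sampleCov u v + (d / ((d : ℝ) - 1)) * (sampleMean u * sampleMean v))) := by
    rw [integral_sampleCov_proj hd hindep hL4 hmean hvar hfour]
    field_simp
  refine ⟨hmain, fun hu hv ha_eq => ?_⟩
  set t := c₂ ^ 2 * k * ((d : ℝ) + k + (c₄ / c₂ ^ 2) * (1 - 1 / d))
  have ht : 0 < t := by
    by_contra! ht
    simp [ha_eq, Real.sqrt_eq_zero'.mpr ht] at ha
  have ha_sq : a ^ 2 * t = 1 := by
    rw [ha_eq, div_pow, one_pow, Real.sq_sqrt ht.le, one_div_mul_cancel ht.ne']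
  rw [hmain, hu, hv]
  linear_combination sampleCov u v * ha_sq

theorem stmt19
    {Ω : Type} [MeasureSpace Ω] [IsProbabilityMeasure (ℙ : Measure Ω)]
    {k d : ℕ} (hk : 1 ≤ k) (hd : 2 ≤ d)
    (B : Ω → Matrix (Fin k) (Fin d) ℝ)
    (hmeas : ∀ j m, Measurable fun ω => B ω j m)
    (hindep : iIndepFun
      (fun (p : Fin k × Fin d) ω => B ω p.1 p.2) ℙ)
    (hident : ∀ j m j' m', IdentDistrib (fun ω => B ω j m) (fun ω => B ω j' m') ℙ ℙ)
    (hL4 : ∀ j m, MemLp (fun ω => B ω j m) 4 ℙ)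
    (c₂ c₄ : ℝ) (hc₂ : 0 < c₂)
    (hmean : ∀ j m, ∫ ω, B ω j m = 0)
    (hvar : ∀ j m, ∫ ω, (B ω j m) ^ 2 = c₂)
    (hfour : ∀ j m, ∫ ω, (B ω j m) ^ 4 = 3 * c₂ ^ 2 + c₄)
    (a : ℝ) (ha : 0 < a) (u v : Fin d → ℝ) :
    (∫ ω, sampleCov (proj a (B ω) u) (proj a (B ω) v)
        = c₂ ^ 2 * a ^ 2 * k * (((d : ℝ) + k) * sampleCov u v
            + d * (sampleMean u * sampleMean v)
            + (c₄ / c₂ ^ 2) * (1 - 1 / d)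
              * (sampleCov u v + (d / ((d : ℝ) - 1)) * (sampleMean u * sampleMean v))))
    ∧ (sampleMean u = 0 → sampleMean v = 0 →
        a = 1 / Real.sqrt (c₂ ^ 2 * k * ((d : ℝ) + k + (c₄ / c₂ ^ 2) * (1 - 1 / d))) →
        ∫ ω, sampleCov (proj a (B ω) u) (proj a (B ω) v) = sampleCov u v) :=
  stmt19_general hd B hindep hL4 c₂ c₄ hc₂ hmean hvar hfour a ha u v
end
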